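/- arXiv:0905.0298 — 4 statements merged into one kernel-verified Lean document; each statement's English description precedes it below -/
import Mathlib

section
/- Let m ≥ 3 and let P be a finite set of complex numbers with |P| = k ≥ 3 having no m points on a line. Then there exists a finite set A ⊆ ℂ with exactly k² − k + 1 points, having no m points on a line, such that S_P(A) ≥ 2k − 1. -/
open MeasureTheory

noncomputable section

/-- `Q` is a similar copy of `P`: the image of `P` under an
orientation-preserving similarity `p ↦ z·p + w`, `z ≠ 0`. -/
def SimilarCopy (P Q : Finset ℂ) : Prop :=
  ∃ z w : ℂ, z ≠ 0 ∧ (Q : Set ℂ) = (fun p => z * p + w) '' (P : Set ℂ)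

/-- `SP P Q` is the number of subsets of `Q` that are similar copies of `P`. -/
def SP (P Q : Finset ℂ) : ℕ :=
  letI := Classical.decPred (SimilarCopy P)
  (Q.powerset.filter (SimilarCopy P)).card

/-- `Q` has no `m` points on a line: every collinear subset has at most `m - 1` points. -/
def NoMOnLine (m : ℕ) (Q : Finset ℂ) : Prop :=
  ∀ S ⊆ Q, Collinear ℝ (S : Set ℂ) → S.card ≤ m - 1

/-- `Q` has `m` points on a line. -/
def HasMOnLine (m : ℕ) (Q : Finset ℂ) : Prop :=
  ∃ S ⊆ Q, S.card = m ∧ Collinear ℝ (S : Set ℂ)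

/-- The number of orientation-preserving isometries of `ℂ` mapping `P` onto itself,
i.e. maps `p ↦ u·p + w` with `|u| = 1` fixing `P` setwise. -/
def IsoPlusCard (P : Finset ℂ) : ℕ :=
  {uw : ℂ × ℂ | ‖uw.1‖ = 1 ∧
    (fun p => uw.1 * p + uw.2) '' (P : Set ℂ) = (P : Set ℂ)}.ncard

/-- The index of `A` with respect to the pattern `P`. -/
def indexP (P A : Finset ℂ) : ℝ :=
  Real.log ((IsoPlusCard P : ℝ) * SP P A + A.card) / Real.log A.card

/-- `SPnm P n m` : the maximum of `SP P Q` over `n`-point sets `Q`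
with no `m` points on a line. -/
def SPnm (P : Finset ℂ) (n m : ℕ) : ℕ :=
  sSup {k | ∃ Q : Finset ℂ, Q.card = n ∧ NoMOnLine m Q ∧ SP P Q = k}

/-- `SPn P n` : the maximum of `SP P Q` over all `n`-point sets `Q`. -/
def SPn (P : Finset ℂ) (n : ℕ) : ℕ :=
  sSup {k | ∃ Q : Finset ℂ, Q.card = n ∧ SP P Q = k}

/-- The Minkowski sum `B + C` of two finite sets of complex numbers. -/
def minkSum (B C : Finset ℂ) : Finset ℂ :=
  letI := Classical.decEq ℂ
  Finset.image₂ (· + ·) B C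

/-- `Q` contains four pairwise distinct points forming a parallelogram. -/
def HasParallelogram (Q : Finset ℂ) : Prop :=
  ∃ p₁ ∈ Q, ∃ p₂ ∈ Q, ∃ p₃ ∈ Q, ∃ p₄ ∈ Q,
    p₁ ≠ p₂ ∧ p₁ ≠ p₃ ∧ p₁ ≠ p₄ ∧ p₂ ≠ p₃ ∧ p₂ ≠ p₄ ∧ p₃ ≠ p₄ ∧
    p₂ - p₁ = p₄ - p₃

/-- `Q` is parallelogram-free: no 3 collinear points and no parallelogram. -/
def ParallelogramFree (Q : Finset ℂ) : Prop :=
  (∀ S ⊆ Q, Collinear ℝ (S : Set ℂ) → S.card ≤ 2) ∧ ¬ HasParallelogram Q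

/-- The set `Q(P, A, u, v) = ⋃_{p ∈ P} (u·p + (v·p − p + 1)·A)`. -/
def Qset (P A : Finset ℂ) (u v : ℂ) : Finset ℂ :=
  letI := Classical.decEq ℂ
  P.biUnion fun p => A.image fun a => u * p + (v * p - p + 1) * a

/-- The vertex set of the regular `k`-gon. -/
def Rpoly (k : ℕ) : Finset ℂ :=
  letI := Classical.decEq ℂ
  (Finset.range k).image fun j : ℕ => Complex.exp (2 * Real.pi * Complex.I * (j : ℂ) / (k : ℂ))

/-- `ω = e^{2πi/3}`. -/
def omega3 : ℂ := Complex.exp (2 * Real.pi * Complex.I / 3)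

/-- The vertex set `{1, ω, ω²}` of an equilateral triangle. -/
def triEq : Finset ℂ :=
  letI := Classical.decEq ℂ
  {1, omega3, omega3 ^ 2}

/-! Fix `q₀ ∈ P` and consider the grid `A = {q + T p (q - q₀) : p, q ∈ P}`. Its row
`q ↦ (1 + T p) q - T p q₀` is a similar copy of `P` for every `p`, and so is its column
`p ↦ T (q - q₀) p + q` for every `q ≠ q₀`, while the column `q₀` collapses to the single point
`q₀`; for generic `T` there are no other coincidences, which gives `k² - k + 1` points and
`2k - 1` copies of `P`.

Take `T = s + s² i`. Coincidences and collinearities of three grid points are polynomial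
conditions in `s`, so for all but finitely many `s` each of them that holds at `s` holds
identically in `s`. At `s = 0`
the grid point `(p, q)` is `q`, so collinear grid points lie in collinear columns, and a line
through two points of one column cannot meet another column. Hence `m` collinear grid points
either lie in `m` collinear columns, giving `m` collinear points of `P`, or lie in one column,
a similar copy of `P`. -/

open Complex Polynomial ComplexConjugate

theorem collinear_iff_forall_im_mul_conj_eq_zero (s : Set ℂ) :
    Collinear ℝ s ↔ ∀ a ∈ s, ∀ b ∈ s, ∀ c ∈ s, ((b - a) * conj (c - a)).im = 0 := by
  constructor
  · intro h a ha b hb c hc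
    obtain ⟨p₀, v, hv⟩ := (collinear_iff_exists_forall_eq_smul_vadd s).mp h
    obtain ⟨ra, rfl⟩ := hv a ha
    obtain ⟨rb, rfl⟩ := hv b hb
    obtain ⟨rc, rfl⟩ := hv c hc
    have : ((rb • v +ᵥ p₀) - (ra • v +ᵥ p₀)) * conj ((rc • v +ᵥ p₀) - (ra • v +ᵥ p₀)) =
        ((rb - ra) * (rc - ra) * normSq v : ℝ) := by
      simp only [vadd_eq_add, Complex.real_smul, map_sub, map_add, map_mul, conj_ofReal]
      push_cast
      rw [← mul_conj]
      ring
    rw [this, ofReal_im]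
  · intro h
    rcases s.eq_empty_or_nonempty with rfl | ⟨a, ha⟩
    · exact collinear_empty ℝ ℂ
    by_cases hs : ∃ b ∈ s, b ≠ a
    · obtain ⟨b, hb, hba⟩ := hs
      refine (collinear_iff_of_mem ha).mpr ⟨b - a, fun c hc => ⟨((c - a) / (b - a)).re, ?_⟩⟩
      have hreal : (((c - a) / (b - a)).re : ℂ) = (c - a) / (b - a) := by
        have hcross := h a ha b hb c hc
        simp only [mul_im, conj_re, conj_im] at hcross
        refine Complex.ext rfl ?_
        rw [ofReal_im, div_im, ← sub_div,
          (by linarith : (c - a).im * (b - a).re - (c - a).re * (b - a).im = 0), zero_div]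
      rw [vadd_eq_add, Complex.real_smul, hreal, div_mul_cancel₀ _ (sub_ne_zero.mpr hba)]
      ring
    · push Not at hs
      exact (collinear_iff_of_mem ha).mpr ⟨0, fun c hc => ⟨0, by simp [hs c hc]⟩⟩

theorem Collinear.image_mul_add {s : Set ℂ} (h : Collinear ℝ s) (c d : ℂ) :
    Collinear ℝ ((fun x => c * x + d) '' s) := by
  rw [collinear_iff_forall_im_mul_conj_eq_zero] at h ⊢
  rintro _ ⟨a, ha, rfl⟩ _ ⟨b, hb, rfl⟩ _ ⟨e, he, rfl⟩
  have : (c * b + d - (c * a + d)) * conj (c * e + d - (c * a + d)) =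
      c * conj c * ((b - a) * conj (e - a)) := by
    simp only [map_sub, map_add, map_mul]
    ring
  rw [this, mul_conj, im_ofReal_mul, h a ha b hb e he, mul_zero]

theorem NoMOnLine.image_mul_add {m : ℕ} {P : Finset ℂ} (hP : NoMOnLine m P) {a : ℂ}
    (ha : a ≠ 0) (b : ℂ) : NoMOnLine m (P.image fun p => a * p + b) := by
  classical
  intro S hS hcol
  have hinv : ∀ x, a * (a⁻¹ * x + -(a⁻¹ * b)) + b = x := fun x => by field_simp; ring
  have hpre : S.image (fun x => a⁻¹ * x + -(a⁻¹ * b)) ⊆ P := by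
    intro p hp
    obtain ⟨x, hx, rfl⟩ := Finset.mem_image.mp hp
    obtain ⟨q, hq, rfl⟩ := Finset.mem_image.mp (hS hx)
    rwa [mul_add, ← mul_assoc, inv_mul_cancel₀ ha, one_mul, add_neg_cancel_right]
  have hinj : Set.InjOn (fun x => a⁻¹ * x + -(a⁻¹ * b)) S := fun x _ y _ hxy => by
    rw [← hinv x, ← hinv y]; exact congrArg (fun p => a * p + b) hxy
  have := hP _ hpre (by rw [Finset.coe_image]; exact hcol.image_mul_add _ _)
  rwa [Finset.card_image_of_injOn hinj] at this

theorem Polynomial.finite_or_forall_eval_ofReal_eq_zero (U : ℂ[X]) :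
    {s : ℝ | U.eval (s : ℂ) = 0}.Finite ∨ ∀ s : ℝ, U.eval (s : ℂ) = 0 := by
  by_cases hU : U = 0
  · simp [hU]
  · exact .inl ((finite_setOfPred_isRoot hU).preimage ofReal_injective.injOn)

theorem Polynomial.finite_or_forall_im_eval_mul_conj_eq_zero (U V : ℂ[X]) :
    {s : ℝ | (U.eval (s : ℂ) * conj (V.eval (s : ℂ))).im = 0}.Finite ∨
      ∀ s : ℝ, (U.eval (s : ℂ) * conj (V.eval (s : ℂ))).im = 0 := by
  have hconj (W : ℂ[X]) (s : ℝ) : (W.map (starRingEnd ℂ)).eval (s : ℂ) = conj (W.eval (s : ℂ)) := by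
    rw [eval_map, ← eval₂_hom, conj_ofReal]
  have hH (s : ℝ) : (U * V.map (starRingEnd ℂ) - U.map (starRingEnd ℂ) * V).eval (s : ℂ) = 0 ↔
      (U.eval (s : ℂ) * conj (V.eval (s : ℂ))).im = 0 := by
    have : (U * V.map (starRingEnd ℂ) - U.map (starRingEnd ℂ) * V).eval (s : ℂ) =
        (2 * (U.eval (s : ℂ) * conj (V.eval (s : ℂ))).im : ℝ) * I := by
      rw [← sub_conj]
      simp only [eval_sub, eval_mul, hconj, map_mul, conj_conj, mul_comm (conj (U.eval (s : ℂ)))]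
    rw [this, mul_eq_zero, ofReal_eq_zero]
    simp [I_ne_zero]
  simpa only [hH] using
    finite_or_forall_eval_ofReal_eq_zero (U * V.map (starRingEnd ℂ) - U.map (starRingEnd ℂ) * V)

theorem finite_setOf_exists_and_not_forall {ι : Type*} (I : Finset ι) {φ : ι → ℝ → Prop}
    (h : ∀ i ∈ I, {s | φ i s}.Finite ∨ ∀ s, φ i s) :
    {s | ∃ i ∈ I, φ i s ∧ ¬ ∀ s', φ i s'}.Finite := by
  refine (I.finite_toSet.biUnion fun i hi => ?_).subset fun s ⟨i, hi, hs⟩ => Set.mem_biUnion hi hs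
  rcases h i hi with hfin | hall
  · exact hfin.subset fun s hs => hs.1
  · exact Set.finite_empty.subset fun s hs => hs.2 hall

/- The parameter `T` runs along this parabola rather than along a line `s ↦ s * z`, which would
need a generic direction `z` as well: see `mul_conj_eq_zero_of_forall_im_parabola`. -/
def parabola (s : ℝ) : ℂ := ⟨s, s ^ 2⟩

theorem parabola_ne_zero {s : ℝ} (hs : s ≠ 0) : parabola s ≠ 0 := fun h =>
  hs (congrArg re h)

theorem mul_conj_eq_zero_of_forall_im_parabola (b e w : ℂ)
    (h : ∀ s : ℝ, (parabola s * b * conj (e + parabola s * w)).im = 0) : b * conj e = 0 := by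
  have hcoeffs (s : ℝ) :
      s * (b * conj e).im + s ^ 2 * (b * conj e).re + (s ^ 2 + s ^ 4) * (b * conj w).im = 0 := by
    have : parabola s * b * conj (e + parabola s * w) =
        parabola s * (b * conj e) + parabola s * conj (parabola s) * (b * conj w) := by
      simp only [map_add, map_mul]
      ring
    rw [← h s, this, mul_conj, add_im, im_ofReal_mul, mul_im (parabola s), normSq_apply]
    simp only [parabola]
    ring
  have h1 := hcoeffs 1
  have h2 := hcoeffs (-1)
  have h3 := hcoeffs 2
  norm_num at h1 h2 h3
  exact Complex.ext (by simp; linarith) (by simp; linarith)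

-- The point in row `x.1` and column `x.2`; the whole column `q₀` collapses to `q₀`.
def gridPoint (q₀ T : ℂ) (x : ℂ × ℂ) : ℂ := x.2 + T * (x.1 * (x.2 - q₀))

def gridPoly (q₀ : ℂ) (x : ℂ × ℂ) : ℂ[X] := C x.2 + (X + C I * X ^ 2) * C (x.1 * (x.2 - q₀))

theorem eval_gridPoly (q₀ : ℂ) (x : ℂ × ℂ) (s : ℝ) :
    (gridPoly q₀ x).eval (s : ℂ) = gridPoint q₀ (parabola s) x := by
  simp only [gridPoly, gridPoint, parabola, mk_eq_add_mul_I, eval_add, eval_mul, eval_C, eval_X,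
    eval_pow, ofReal_pow]
  ring

theorem gridPoint_parabola_zero (q₀ : ℂ) (x : ℂ × ℂ) : gridPoint q₀ (parabola 0) x = x.2 := by
  simp [gridPoint, parabola, Complex.ext_iff]

theorem gridPoint_of_snd_eq {q₀ T : ℂ} {x : ℂ × ℂ} (h : x.2 = q₀) : gridPoint q₀ T x = q₀ := by
  simp [gridPoint, h]

theorem gridPoint_sub_gridPoint_of_snd_eq {q₀ T : ℂ} {x y : ℂ × ℂ} (h : y.2 = x.2) :
    gridPoint q₀ T y - gridPoint q₀ T x = T * ((y.1 - x.1) * (x.2 - q₀)) := by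
  simp only [gridPoint, h]
  ring

structure IsGenericGridParam (q₀ T : ℂ) (P : Finset ℂ) : Prop where
  ne_zero : T ≠ 0
  snd_eq_of_eq : ∀ x ∈ P ×ˢ P, ∀ y ∈ P ×ˢ P, gridPoint q₀ T x = gridPoint q₀ T y → x.2 = y.2
  snd_collinear : ∀ x ∈ P ×ˢ P, ∀ y ∈ P ×ˢ P, ∀ z ∈ P ×ˢ P,
    ((gridPoint q₀ T y - gridPoint q₀ T x) * conj (gridPoint q₀ T z - gridPoint q₀ T x)).im = 0 →
      ((y.2 - x.2) * conj (z.2 - x.2)).im = 0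
  snd_eq_of_collinear : ∀ x ∈ P ×ˢ P, ∀ y ∈ P ×ˢ P, ∀ z ∈ P ×ˢ P,
    ((gridPoint q₀ T y - gridPoint q₀ T x) * conj (gridPoint q₀ T z - gridPoint q₀ T x)).im = 0 →
      y.2 = x.2 → gridPoint q₀ T x ≠ gridPoint q₀ T y → z.2 = x.2

theorem exists_isGenericGridParam (q₀ : ℂ) (P : Finset ℂ) : ∃ T, IsGenericGridParam q₀ T P := by
  let G (s : ℝ) := gridPoint q₀ (parabola s)
  have hpairs := finite_setOf_exists_and_not_forall ((P ×ˢ P) ×ˢ (P ×ˢ P))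
    (φ := fun i s => G s i.1 = G s i.2) fun i _ => by
      simpa only [eval_sub, eval_gridPoly, sub_eq_zero] using
        finite_or_forall_eval_ofReal_eq_zero (gridPoly q₀ i.1 - gridPoly q₀ i.2)
  have htriples := finite_setOf_exists_and_not_forall ((P ×ˢ P) ×ˢ (P ×ˢ P) ×ˢ (P ×ˢ P))
    (φ := fun i s => ((G s i.2.1 - G s i.1) * conj (G s i.2.2 - G s i.1)).im = 0) fun i _ => by
      simpa only [eval_sub, eval_gridPoly] using finite_or_forall_im_eval_mul_conj_eq_zero
        (gridPoly q₀ i.2.1 - gridPoly q₀ i.1) (gridPoly q₀ i.2.2 - gridPoly q₀ i.1)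
  -- For `s` outside this finite set, every coincidence and every collinearity among grid points
  -- persists for all `s'`, in particular at `s' = 0`, where the grid collapses onto `P`.
  obtain ⟨s, -, hs⟩ := Set.infinite_univ.exists_notMem_finite
    ((Set.finite_singleton 0).union (hpairs.union htriples))
  simp only [Set.mem_union, Set.mem_singleton_iff, Set.mem_ofPred_eq, not_or, not_exists, not_and,
    not_not] at hs
  obtain ⟨hs0, hpair, htriple⟩ := hs
  refine ⟨parabola s, parabola_ne_zero hs0, fun x hx y hy hxy => ?_,
    fun x hx y hy z hz hxyz => ?_, fun x hx y hy z hz hxyz hyx hne => ?_⟩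
  · simpa only [G, gridPoint_parabola_zero] using hpair (x, y) (Finset.mem_product.2 ⟨hx, hy⟩) hxy 0
  · simpa only [G, gridPoint_parabola_zero] using htriple (x, y, z)
      (Finset.mem_product.2 ⟨hx, Finset.mem_product.2 ⟨hy, hz⟩⟩) hxyz 0
  · have hb : (y.1 - x.1) * (x.2 - q₀) ≠ 0 := fun h0 => hne <| (sub_eq_zero.1 <| by
      rw [gridPoint_sub_gridPoint_of_snd_eq hyx, h0, mul_zero]).symm
    have hall := htriple (x, y, z)
      (Finset.mem_product.2 ⟨hx, Finset.mem_product.2 ⟨hy, hz⟩⟩) hxyz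
    have hprod := mul_conj_eq_zero_of_forall_im_parabola _ (z.2 - x.2)
      (z.1 * (z.2 - q₀) - x.1 * (x.2 - q₀)) fun s' => by
        have hzx : G s' z - G s' x =
            z.2 - x.2 + parabola s' * (z.1 * (z.2 - q₀) - x.1 * (x.2 - q₀)) := by
          simp only [G, gridPoint]
          ring
        rw [← hall s', hzx, gridPoint_sub_gridPoint_of_snd_eq hyx, mul_assoc]
    rwa [mul_eq_zero, or_iff_right hb, map_eq_zero, sub_eq_zero] at hprod

theorem card_le_SP {P A : Finset ℂ} {F : Finset (Finset ℂ)}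
    (hF : ∀ B ∈ F, B ⊆ A ∧ SimilarCopy P B) : F.card ≤ SP P A := by
  classical
  exact Finset.card_le_card fun B hB =>
    Finset.mem_filter.2 ⟨Finset.mem_powerset.2 (hF B hB).1, (hF B hB).2⟩

def grid (q₀ T : ℂ) (P : Finset ℂ) : Finset ℂ := (P ×ˢ P).image (gridPoint q₀ T)

def gridRow (q₀ T : ℂ) (P : Finset ℂ) (p : ℂ) : Finset ℂ := P.image fun q => gridPoint q₀ T (p, q)

def gridCol (q₀ T : ℂ) (P : Finset ℂ) (q : ℂ) : Finset ℂ := P.image fun p => gridPoint q₀ T (p, q)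

section Grid

variable {q₀ T : ℂ} {P : Finset ℂ}

theorem gridRow_subset_grid {p : ℂ} (hp : p ∈ P) : gridRow q₀ T P p ⊆ grid q₀ T P :=
  Finset.image_subset_iff.2 fun _ hq => Finset.mem_image_of_mem _ (Finset.mem_product.2 ⟨hp, hq⟩)

theorem gridCol_subset_grid {q : ℂ} (hq : q ∈ P) : gridCol q₀ T P q ⊆ grid q₀ T P :=
  Finset.image_subset_iff.2 fun _ hp => Finset.mem_image_of_mem _ (Finset.mem_product.2 ⟨hp, hq⟩)

theorem gridCol_eq_image (q : ℂ) :
    gridCol q₀ T P q = P.image fun p => T * (q - q₀) * p + q := by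
  simp only [gridCol, gridPoint]
  congr 1
  ext p
  ring

theorem similarCopy_gridCol (hT : T ≠ 0) {q : ℂ} (hq : q ≠ q₀) :
    SimilarCopy P (gridCol q₀ T P q) :=
  ⟨T * (q - q₀), q, mul_ne_zero hT (sub_ne_zero.2 hq), by rw [gridCol_eq_image, Finset.coe_image]⟩

theorem grid_eq_insert (hq₀ : q₀ ∈ P) :
    grid q₀ T P = insert q₀ ((P ×ˢ P.erase q₀).image (gridPoint q₀ T)) := by
  ext a
  simp only [grid, Finset.mem_insert, Finset.mem_image, Finset.mem_product, Finset.mem_erase]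
  constructor
  · rintro ⟨x, ⟨hx1, hx2⟩, rfl⟩
    by_cases h : x.2 = q₀
    · exact .inl (gridPoint_of_snd_eq h)
    · exact .inr ⟨x, ⟨hx1, h, hx2⟩, rfl⟩
  · rintro (ha | ⟨x, ⟨hx1, -, hx2⟩, rfl⟩)
    · exact ⟨(q₀, q₀), ⟨hq₀, hq₀⟩, (gridPoint_of_snd_eq rfl).trans ha.symm⟩
    · exact ⟨x, ⟨hx1, hx2⟩, rfl⟩

namespace IsGenericGridParam

theorem injOn (h : IsGenericGridParam q₀ T P) :
    Set.InjOn (gridPoint q₀ T) (P ×ˢ P.erase q₀ : Finset (ℂ × ℂ)) := by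
  intro x hx y hy hxy
  simp only [Finset.coe_product, Set.mem_prod, Finset.mem_coe, Finset.mem_erase] at hx hy
  have hsnd := h.snd_eq_of_eq x (Finset.mem_product.2 ⟨hx.1, hx.2.2⟩) y
    (Finset.mem_product.2 ⟨hy.1, hy.2.2⟩) hxy
  have := gridPoint_sub_gridPoint_of_snd_eq (q₀ := q₀) (T := T) hsnd.symm
  rw [hxy, sub_self, eq_comm] at this
  simp only [mul_eq_zero, h.ne_zero, sub_eq_zero, hx.2.1, false_or, or_false] at this
  exact Prod.ext this.symm hsnd

theorem card_grid (h : IsGenericGridParam q₀ T P) (hq₀ : q₀ ∈ P) :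
    (grid q₀ T P).card = P.card ^ 2 - P.card + 1 := by
  have hq₀_notMem : q₀ ∉ (P ×ˢ P.erase q₀).image (gridPoint q₀ T) := by
    intro hmem
    obtain ⟨x, hx, hxq₀⟩ := Finset.mem_image.1 hmem
    rw [Finset.mem_product, Finset.mem_erase] at hx
    exact hx.2.1 (h.snd_eq_of_eq x (Finset.mem_product.2 ⟨hx.1, hx.2.2⟩) (q₀, q₀)
      (Finset.mem_product.2 ⟨hq₀, hq₀⟩) (hxq₀.trans (gridPoint_of_snd_eq (x := (q₀, q₀)) rfl).symm))
  rw [grid_eq_insert hq₀, Finset.card_insert_of_notMem hq₀_notMem,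
    Finset.card_image_of_injOn h.injOn, Finset.card_product, Finset.card_erase_of_mem hq₀,
    Nat.mul_sub_one, sq]

theorem similarCopy_gridRow (h : IsGenericGridParam q₀ T P) (hP : 1 < P.card) {p : ℂ}
    (hp : p ∈ P) :
    SimilarCopy P (gridRow q₀ T P p) := by
  have hscale : 1 + T * p ≠ 0 := by
    intro h0
    obtain ⟨a, ha, b, hb, hab⟩ := Finset.one_lt_card.1 hP
    refine hab (h.snd_eq_of_eq (p, a) (Finset.mem_product.2 ⟨hp, ha⟩) (p, b)
      (Finset.mem_product.2 ⟨hp, hb⟩) ?_)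
    simp only [gridPoint]
    linear_combination (a - b) * h0
  refine ⟨1 + T * p, -(T * p * q₀), hscale, ?_⟩
  rw [gridRow, Finset.coe_image]
  refine Set.image_congr fun q _ => ?_
  simp only [gridPoint]
  ring

theorem noMOnLine_grid (h : IsGenericGridParam q₀ T P) {m : ℕ} (hP : NoMOnLine m P) :
    NoMOnLine m (grid q₀ T P) := by
  intro S hS hcol
  by_contra hlt
  have hsurj : Set.SurjOn (gridPoint q₀ T) (P ×ˢ P : Finset (ℂ × ℂ)) S := fun a ha => by
    simpa [grid] using hS ha
  obtain ⟨I, hIsub, hinj, rfl⟩ := Finset.exists_subset_injOn_image_eq_of_surjOn _ S hsurj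
  have hI (x : ℂ × ℂ) (hx : x ∈ I) : x ∈ P ×ˢ P := hIsub hx
  have hcardI : (I.image (gridPoint q₀ T)).card = I.card := Finset.card_image_of_injOn hinj
  have hcross (x : ℂ × ℂ) (hx : x ∈ I) (y : ℂ × ℂ) (hy : y ∈ I) (z : ℂ × ℂ) (hz : z ∈ I) :
      ((gridPoint q₀ T y - gridPoint q₀ T x) * conj (gridPoint q₀ T z - gridPoint q₀ T x)).im = 0 :=
    (collinear_iff_forall_im_mul_conj_eq_zero _).1 hcol _ (Finset.mem_image_of_mem _ hx)
      _ (Finset.mem_image_of_mem _ hy) _ (Finset.mem_image_of_mem _ hz)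
  by_cases hsnd : Set.InjOn Prod.snd (I : Set (ℂ × ℂ))
  · have hLcol : Collinear ℝ (I.image Prod.snd : Set ℂ) := by
      rw [collinear_iff_forall_im_mul_conj_eq_zero, Finset.coe_image]
      rintro _ ⟨x, hx, rfl⟩ _ ⟨y, hy, rfl⟩ _ ⟨z, hz, rfl⟩
      exact h.snd_collinear x (hI x hx) y (hI y hy) z (hI z hz) (hcross x hx y hy z hz)
    have := hP _ (Finset.image_subset_iff.2 fun x hx => (Finset.mem_product.1 (hI x hx)).2) hLcol
    rw [Finset.card_image_of_injOn hsnd, ← hcardI] at this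
    exact hlt this
  · obtain ⟨x, hx, y, hy, hxy, hne⟩ : ∃ x ∈ I, ∃ y ∈ I, x.2 = y.2 ∧ x ≠ y := by
      simpa [Set.InjOn] using hsnd
    have hgne : gridPoint q₀ T x ≠ gridPoint q₀ T y := fun e => hne (hinj hx hy e)
    have hxq₀ : x.2 ≠ q₀ := fun e =>
      hgne ((gridPoint_of_snd_eq e).trans (gridPoint_of_snd_eq (hxy ▸ e)).symm)
    have hcolumn : I.image (gridPoint q₀ T) ⊆ gridCol q₀ T P x.2 := by
      refine Finset.image_subset_iff.2 fun z hz => Finset.mem_image.2 ⟨z.1, ?_, ?_⟩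
      · exact (Finset.mem_product.1 (hI z hz)).1
      · rw [← h.snd_eq_of_collinear x (hI x hx) y (hI y hy) z (hI z hz) (hcross x hx y hy z hz)
          hxy.symm hgne]
    have hPcol := hP.image_mul_add (mul_ne_zero h.ne_zero (sub_ne_zero.2 hxq₀)) x.2
    rw [← gridCol_eq_image] at hPcol
    exact hlt (hPcol _ hcolumn hcol)

theorem two_mul_card_sub_one_le_SP (h : IsGenericGridParam q₀ T P) (hq₀ : q₀ ∈ P)
    (hP : 1 < P.card) :
    2 * P.card - 1 ≤ SP P (grid q₀ T P) := by
  obtain ⟨q₁, hq₁, hq₁₀⟩ := Finset.exists_mem_ne hP q₀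
  have hrow_inj : Set.InjOn (gridRow q₀ T P) P := by
    intro p hp p' hp' he
    obtain ⟨q, hq, hqe⟩ := Finset.mem_image.1 (he ▸ Finset.mem_image_of_mem _ hq₁ :
      gridPoint q₀ T (p, q₁) ∈ gridRow q₀ T P p')
    have hqq₁ : q = q₁ := h.snd_eq_of_eq (p', q) (Finset.mem_product.2 ⟨hp', hq⟩) (p, q₁)
      (Finset.mem_product.2 ⟨hp, hq₁⟩) hqe
    subst hqq₁
    have hmem (p'' : ℂ) (hp'' : p'' ∈ P) : (p'', q) ∈ (P ×ˢ P.erase q₀ : Finset (ℂ × ℂ)) :=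
      Finset.mem_product.2 ⟨hp'', Finset.mem_erase.2 ⟨hq₁₀, hq⟩⟩
    have := h.injOn (hmem p' hp') (hmem p hp) hqe
    exact (Prod.ext_iff.1 this).1.symm
  have hcol_inj : Set.InjOn (gridCol q₀ T P) P := by
    intro q hq q' hq' he
    obtain ⟨p, hp, hpe⟩ := Finset.mem_image.1 (he ▸ Finset.mem_image_of_mem _ hq₀ :
      gridPoint q₀ T (q₀, q) ∈ gridCol q₀ T P q')
    exact (h.snd_eq_of_eq (p, q') (Finset.mem_product.2 ⟨hp, hq'⟩) (q₀, q)
      (Finset.mem_product.2 ⟨hq₀, hq⟩) hpe).symm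
  have hdisj : Disjoint (P.image (gridRow q₀ T P)) ((P.erase q₀).image (gridCol q₀ T P)) := by
    rw [Finset.disjoint_left]
    rintro _ hrow hcol
    obtain ⟨p, hp, rfl⟩ := Finset.mem_image.1 hrow
    obtain ⟨q, hq, he⟩ := Finset.mem_image.1 hcol
    obtain ⟨hqq₀, hq⟩ := Finset.mem_erase.1 hq
    have hq₀row : q₀ ∈ gridRow q₀ T P p :=
      Finset.mem_image.2 ⟨q₀, hq₀, gridPoint_of_snd_eq rfl⟩
    obtain ⟨p', hp', hpe⟩ := Finset.mem_image.1 (he ▸ hq₀row)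
    exact hqq₀ (h.snd_eq_of_eq (p', q) (Finset.mem_product.2 ⟨hp', hq⟩) (p', q₀)
      (Finset.mem_product.2 ⟨hp', hq₀⟩) (hpe.trans (gridPoint_of_snd_eq (x := (p', q₀)) rfl).symm))
  calc 2 * P.card - 1 = P.card + (P.erase q₀).card := by
        rw [Finset.card_erase_of_mem hq₀]
        omega
    _ = (P.image (gridRow q₀ T P) ∪ (P.erase q₀).image (gridCol q₀ T P)).card := by
        rw [Finset.card_union_of_disjoint hdisj, Finset.card_image_of_injOn hrow_inj,
          Finset.card_image_of_injOn (hcol_inj.mono (Finset.erase_subset q₀ P))]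
    _ ≤ SP P (grid q₀ T P) := card_le_SP fun B hB => by
        rcases Finset.mem_union.1 hB with hB | hB
        · obtain ⟨p, hp, rfl⟩ := Finset.mem_image.1 hB
          exact ⟨gridRow_subset_grid hp, h.similarCopy_gridRow hP hp⟩
        · obtain ⟨q, hq, rfl⟩ := Finset.mem_image.1 hB
          obtain ⟨hqq₀, hq⟩ := Finset.mem_erase.1 hq
          exact ⟨gridCol_subset_grid hq, similarCopy_gridCol h.ne_zero hqq₀⟩

end IsGenericGridParam

end Grid

theorem stmt4_general (m k : ℕ) (hk : 3 ≤ k) (P : Finset ℂ)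
    (hPcard : P.card = k) (hPm : NoMOnLine m P) :
    ∃ A : Finset ℂ, A.card = k ^ 2 - k + 1 ∧ NoMOnLine m A ∧ 2 * k - 1 ≤ SP P A := by
  obtain ⟨q₀, hq₀⟩ : P.Nonempty := Finset.card_pos.1 (by omega)
  obtain ⟨T, hT⟩ := exists_isGenericGridParam q₀ P
  refine ⟨grid q₀ T P, ?_, hT.noMOnLine_grid hPm, ?_⟩
  · rw [hT.card_grid hq₀, hPcard]
  · simpa only [hPcard] using hT.two_mul_card_sub_one_le_SP hq₀ (by omega)

/-- For any pattern `P` with `|P| = k ≥ 3` and no `m` points on a line, there is a set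
`A` of exactly `k² − k + 1` points, no `m` on a line, with `S_P(A) ≥ 2k − 1`. -/
theorem stmt4 (m k : ℕ) (hm : 3 ≤ m) (hk : 3 ≤ k) (P : Finset ℂ)
    (hPcard : P.card = k) (hPm : NoMOnLine m P) :
    ∃ A : Finset ℂ, A.card = k ^ 2 - k + 1 ∧ NoMOnLine m A ∧ 2 * k - 1 ≤ SP P A :=
  stmt4_general m k hk P hPcard hPm
end
end

section
/- Let A and P be finite parallelogram-free sets of complex numbers. Then the set S of all pairs (u, v) ∈ ℂ² for which the set Q(P, A, u, v) := ⋃_{p ∈ P} {u·p + (v·p − p + 1)·a : a ∈ A} either has fewer than |A|·|P| points, or has three collinear points, or contains four pairwise distinct points p₁, p₂, p₃, p₄ with p₂ − p₁ = p₄ − p₃ (a parallelogram), has Lebesgue measure zero in ℂ². -/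
open MeasureTheory

noncomputable section

/-! Index the points of `Q(P, A, u, v)` by `i = (p, a) ∈ P × A`, as
`φ_i(u, v) = u·p + (v·p − p + 1)·a`. A coincidence `φ_i = φ_j` and a parallelogram relation
`φ_j − φ_i = φ_l − φ_k` are affine equations in `(u, v)`. Their coefficients vanish identically
only when `i = j`, resp. when the quadruple of indices is degenerate: a parallelogram-free set has
no solutions of `x₁ + x₄ = x₂ + x₃` besides the trivial ones.

For fixed `v`, collinearity of three points is a real quadratic equation in `u`. Its
`|u|²`-coefficient is nonzero when the three `p`'s are distinct (no three points of `P` are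
collinear), its linear part is nonzero when exactly two of them agree, and when all three agree the
equation is the collinearity of three points of `A`, scaled by `|v·p − p + 1|²`.

Nontrivial affine and quadratic equations have null zero sets, and Fubini's theorem assembles the
slices. -/

open Complex ComplexConjugate Filter

theorem collinear_iff_im_mul_conj_eq_zero (x y z : ℂ) :
    Collinear ℝ ({x, y, z} : Set ℂ) ↔ ((y - x) * conj (z - x)).im = 0 := by
  rw [collinear_iff_of_mem (Set.mem_insert x _)]
  constructor
  · rintro ⟨w, hw⟩
    obtain ⟨r, rfl⟩ := hw y (by simp)
    obtain ⟨s, rfl⟩ := hw z (by simp)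
    simp only [vadd_eq_add, add_sub_cancel_right, real_smul, map_mul, conj_ofReal]
    rw [show (r : ℂ) * w * (s * conj w) = (r * s : ℝ) * (w * conj w) by push_cast; ring, mul_conj,
      ← ofReal_mul, ofReal_im]
  · intro h
    simp only [Set.forall_mem_insert, Set.mem_singleton_iff, forall_eq]
    rcases eq_or_ne y x with rfl | hyx
    · exact ⟨z - y, ⟨0, by simp⟩, ⟨0, by simp⟩, ⟨1, by simp⟩⟩
    have hre : (((z - x) / (y - x)).re : ℂ) = (z - x) / (y - x) := by
      refine Complex.ext rfl ?_
      rw [ofReal_im, div_im, ← sub_div, eq_comm, div_eq_zero_iff]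
      left
      simp only [mul_im, conj_re, conj_im] at h
      linarith
    refine ⟨y - x, ⟨0, by simp⟩, ⟨1, by simp⟩, ⟨((z - x) / (y - x)).re, ?_⟩⟩
    rw [real_smul, hre, div_mul_cancel₀ _ (sub_ne_zero.2 hyx), vadd_eq_add, sub_add_cancel]

theorem collinear_of_add_eq_two_mul {x y z : ℂ} (h : x + y = 2 * z) :
    Collinear ℝ ({x, z, y} : Set ℂ) := by
  rw [collinear_iff_im_mul_conj_eq_zero, show y - x = 2 * (z - x) by linear_combination h,
    map_mul, map_ofNat, mul_left_comm, mul_conj]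
  norm_cast

theorem im_mul_mul_conj_mul (t x y : ℂ) :
    (t * x * conj (t * y)).im = normSq t * (x * conj y).im := by
  rw [map_mul, show t * x * (conj t * conj y) = t * conj t * (x * conj y) by ring, mul_conj,
    im_ofReal_mul]

theorem im_mul_conj_affine (A B C D u : ℂ) :
    ((A * u + B) * conj (C * u + D)).im =
      (A * conj C).im * normSq u + ((A * conj D - conj B * C) * u).im + (B * conj D).im := by
  simp only [normSq_apply, add_im, sub_im, sub_re, mul_im, mul_re, add_re, conj_re, conj_im]
  ring

namespace ParallelogramFree

variable {A : Finset ℂ}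

theorem not_collinear (hA : ParallelogramFree A) {x y z : ℂ} (hx : x ∈ A) (hy : y ∈ A)
    (hz : z ∈ A) (hxy : x ≠ y) (hxz : x ≠ z) (hyz : y ≠ z) :
    ¬Collinear ℝ ({x, y, z} : Set ℂ) := by
  intro h
  have := hA.1 {x, y, z} (by simp [Finset.insert_subset_iff, *]) (by simpa using h)
  rw [Finset.card_insert_of_notMem (by simp [hxy, hxz]), Finset.card_pair hyz] at this
  omega

theorem eq_of_add_eq_add (hA : ParallelogramFree A) {a₁ a₂ a₃ a₄ : ℂ} (h₁ : a₁ ∈ A)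
    (h₂ : a₂ ∈ A) (h₃ : a₃ ∈ A) (h₄ : a₄ ∈ A) (h : a₁ + a₄ = a₂ + a₃) :
    (a₁ = a₂ ∧ a₃ = a₄) ∨ (a₁ = a₃ ∧ a₂ = a₄) := by
  by_cases h12 : a₁ = a₂
  · exact Or.inl ⟨h12, by linear_combination h12 - h⟩
  by_cases h13 : a₁ = a₃
  · exact Or.inr ⟨h13, by linear_combination h13 - h⟩
  exfalso
  have h24 : a₂ ≠ a₄ := fun e => h13 (by linear_combination h + e)
  by_cases h23 : a₂ = a₃
  · rw [← h23] at h
    have h14 : a₁ ≠ a₄ := fun e => h12 (by linear_combination (h + e) / 2)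
    exact hA.not_collinear h₁ h₂ h₄ h12 h14 h24
      (collinear_of_add_eq_two_mul (by linear_combination h))
  by_cases h14 : a₁ = a₄
  · rw [← h14] at h
    exact hA.not_collinear h₂ h₁ h₃ (Ne.symm h12) h23 h13
      (collinear_of_add_eq_two_mul (by linear_combination -h))
  have h34 : a₃ ≠ a₄ := fun e => h12 (by linear_combination h + e)
  exact hA.2 ⟨a₁, h₁, a₂, h₂, a₃, h₃, a₄, h₄, h12, h13, h14, h23, h24, h34,
    by linear_combination -h⟩

end ParallelogramFree

theorem addHaar_setOf_linearMap_eq {E F : Type*} [NormedAddCommGroup E] [NormedSpace ℝ E]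
    [MeasurableSpace E] [BorelSpace E] [FiniteDimensional ℝ E] (μ : Measure E)
    [μ.IsAddHaarMeasure] [AddCommGroup F] [Module ℝ F] {f : E →ₗ[ℝ] F} (hf : f ≠ 0) (c : F) :
    μ {x | f x = c} = 0 := by
  rcases Set.eq_empty_or_nonempty {x | f x = c} with h | ⟨x₀, hx₀ : f x₀ = c⟩
  · simp [h]
  have : {x | f x = c} = (fun x => -x₀ + x) ⁻¹' (LinearMap.ker f : Set E) := by
    ext x
    simpa [← hx₀, neg_add_eq_zero] using eq_comm
  rw [this, measure_preimage_add]
  exact Measure.addHaar_submodule μ _ (by simpa [LinearMap.ker_eq_top] using hf)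

theorem ae_of_ae_ae_swap {α β : Type*} [MeasureSpace α] [MeasureSpace β]
    [SFinite (volume : Measure α)] [SFinite (volume : Measure β)] {p : α × β → Prop}
    (hp : MeasurableSet {z | p z}) (h : ∀ᵐ y : β, ∀ᵐ x : α, p (x, y)) : ∀ᵐ z : α × β, p z := by
  rw [Measure.volume_eq_prod, Measure.ae_prod_iff_ae_ae hp]
  exact (Measure.ae_ae_comm (p := fun x y => p (x, y)) hp).2 h

theorem ae_mul_add_ne_zero {a b : ℂ} (h : a ≠ 0 ∨ b ≠ 0) : ∀ᵐ z : ℂ, a * z + b ≠ 0 := by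
  refine ae_iff.2 (Set.Subsingleton.measure_zero (fun x hx y hy => ?_) _)
  replace hx : a * x + b = 0 := not_not.1 hx
  replace hy : a * y + b = 0 := not_not.1 hy
  rcases eq_or_ne a 0 with ha | ha
  · simp [ha, h.resolve_left (not_not.2 ha)] at hx
  · exact mul_left_cancel₀ ha (by linear_combination hx - hy)

theorem ae_mul_fst_add_mul_snd_add_ne_zero {α β γ : ℂ} (h : α ≠ 0 ∨ β ≠ 0 ∨ γ ≠ 0) :
    ∀ᵐ uv : ℂ × ℂ, α * uv.1 + β * uv.2 + γ ≠ 0 := by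
  refine ae_of_ae_ae_swap (isOpen_ne_fun (by fun_prop) continuous_const).measurableSet ?_
  rcases eq_or_ne α 0 with hα | hα
  · filter_upwards [ae_mul_add_ne_zero (h.resolve_left (not_not.2 hα))] with v hv
    exact .of_forall fun u => by simpa [hα] using hv
  · exact .of_forall fun v => by
      simpa [add_assoc] using ae_mul_add_ne_zero (b := β * v + γ) (.inl hα)

theorem exists_sphere_superset_setOf_quadratic {K m : ℝ} (hK : K ≠ 0) (δ : ℂ) :
    ∃ c r, {u : ℂ | K * normSq u + (δ * u).im + m = 0} ⊆ Metric.sphere c r := by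
  set w : ℂ := ⟨δ.im / (2 * K), δ.re / (2 * K)⟩
  have hsq : ∀ u, K * normSq (u + w) = K * normSq u + (δ * u).im + K * normSq w := by
    intro u
    simp only [w, normSq_apply, add_re, add_im, mul_im]
    field_simp
    ring
  refine ⟨-w, √(normSq w - m / K), fun u (hu : K * normSq u + (δ * u).im + m = 0) => ?_⟩
  have : normSq (u + w) = normSq w - m / K := by
    apply mul_left_cancel₀ hK
    rw [hsq, mul_sub, mul_div_cancel₀ _ hK]
    linear_combination hu
  rw [mem_sphere_iff_norm, sub_neg_eq_add, norm_def, this]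

theorem ae_quadratic_ne_zero {K m : ℝ} {δ : ℂ} (h : K ≠ 0 ∨ δ ≠ 0 ∨ m ≠ 0) :
    ∀ᵐ u : ℂ, K * normSq u + (δ * u).im + m ≠ 0 := by
  refine ae_iff.2 ?_
  simp only [ne_eq, not_not]
  rcases eq_or_ne K 0 with hK | hK
  · rcases eq_or_ne δ 0 with hδ | hδ
    · simp [hK, hδ, h.resolve_left (not_not.2 hK) |>.resolve_left (not_not.2 hδ)]
    · let f : ℂ →ₗ[ℝ] ℝ := imLm ∘ₗ (LinearMap.mulLeft ℝ δ)
      have hf : f ≠ 0 := fun hf => by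
        simpa [f, hδ] using LinearMap.congr_fun hf (δ⁻¹ * I)
      convert addHaar_setOf_linearMap_eq volume hf (-m) using 2
      simp [f, hK, eq_neg_iff_add_eq_zero]
  · obtain ⟨c, r, hsub⟩ := exists_sphere_superset_setOf_quadratic (m := m) hK δ
    exact measure_mono_null hsub (Measure.addHaar_sphere _ c r)

theorem ae_im_mul_conj_ne_zero {A C : ℂ} {B D : ℂ → ℂ} (hB : Continuous B) (hD : Continuous D)
    (h : ∀ᵐ v : ℂ, (A * conj C).im ≠ 0 ∨ A * conj (D v) - conj (B v) * C ≠ 0 ∨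
      (B v * conj (D v)).im ≠ 0) :
    ∀ᵐ uv : ℂ × ℂ, ((A * uv.1 + B uv.2) * conj (C * uv.1 + D uv.2)).im ≠ 0 := by
  refine ae_of_ae_ae_swap (isOpen_ne_fun (by fun_prop) continuous_const).measurableSet ?_
  filter_upwards [h] with v hv
  simpa only [im_mul_conj_affine] using ae_quadratic_ne_zero hv

theorem ae_mul_sub_add_one_ne_zero (p : ℂ) : ∀ᵐ v : ℂ, v * p - p + 1 ≠ 0 := by
  rcases eq_or_ne p 0 with rfl | hp
  · simp
  · filter_upwards [ae_mul_add_ne_zero (a := p) (b := 1 - p) (.inl hp)] with v hv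
    rwa [show v * p - p + 1 = p * v + (1 - p) by ring]

def qPoint (uv : ℂ × ℂ) (i : ℂ × ℂ) : ℂ :=
  uv.1 * i.1 + (uv.2 * i.1 - i.1 + 1) * i.2

theorem Qset_eq_image (P A : Finset ℂ) (u v : ℂ) :
    Qset P A u v = (P ×ˢ A).image (qPoint (u, v)) := by
  ext q
  simp [Qset, qPoint, and_assoc]

theorem qPoint_sub_qPoint (uv i j : ℂ × ℂ) :
    qPoint uv j - qPoint uv i = (j.1 - i.1) * uv.1 + (qPoint (0, uv.2) j - qPoint (0, uv.2) i) := by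
  simp only [qPoint]
  ring

theorem qPoint_zero_sub_qPoint_zero_of_fst_eq (v : ℂ) {i j : ℂ × ℂ} (h : i.1 = j.1) :
    qPoint (0, v) j - qPoint (0, v) i = (v * i.1 - i.1 + 1) * (j.2 - i.2) := by
  simp only [qPoint, h]
  ring

theorem ae_qPoint_ne {i j : ℂ × ℂ} (hij : i ≠ j) : ∀ᵐ uv, qPoint uv i ≠ qPoint uv j := by
  obtain ⟨p, a⟩ := i
  obtain ⟨q, b⟩ := j
  have h : p - q ≠ 0 ∨ p * a - q * b ≠ 0 ∨ (a - p * a) - (b - q * b) ≠ 0 := by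
    by_contra! h
    exact hij (Prod.ext (by linear_combination h.1) (by linear_combination h.2.1 + h.2.2))
  filter_upwards [ae_mul_fst_add_mul_snd_add_ne_zero h] with uv huv e
  exact huv (by simp only [qPoint] at e; linear_combination e)

theorem eq_or_eq_of_add_eq_add_of_mul_add_mul_eq {A P : Finset ℂ} (hA : ParallelogramFree A)
    (hP : ParallelogramFree P) {i j k l : ℂ × ℂ} (hi : i ∈ P ×ˢ A) (hj : j ∈ P ×ˢ A)
    (hk : k ∈ P ×ˢ A) (hl : l ∈ P ×ˢ A) (hp : i.1 + l.1 = j.1 + k.1) (ha : i.2 + l.2 = j.2 + k.2)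
    (hpa : i.1 * i.2 + l.1 * l.2 = j.1 * j.2 + k.1 * k.2) : i = j ∨ i = k := by
  obtain ⟨p₁, a₁⟩ := i
  obtain ⟨p₂, a₂⟩ := j
  obtain ⟨p₃, a₃⟩ := k
  obtain ⟨p₄, a₄⟩ := l
  simp only [Finset.mem_product, Prod.mk.injEq] at hi hj hk hl hp ha hpa ⊢
  rcases hP.eq_of_add_eq_add hi.1 hj.1 hk.1 hl.1 hp with ⟨rfl, rfl⟩ | ⟨rfl, rfl⟩ <;>
    rcases hA.eq_of_add_eq_add hi.2 hj.2 hk.2 hl.2 ha with ⟨rfl, rfl⟩ | ⟨rfl, rfl⟩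
  · exact .inl ⟨rfl, rfl⟩
  · have : (p₁ - p₃) * (a₁ - a₂) = 0 := by linear_combination hpa
    rcases mul_eq_zero.1 this with h | h
    · exact .inr ⟨sub_eq_zero.1 h, rfl⟩
    · exact .inl ⟨rfl, sub_eq_zero.1 h⟩
  · have : (p₁ - p₂) * (a₁ - a₃) = 0 := by linear_combination hpa
    rcases mul_eq_zero.1 this with h | h
    · exact .inl ⟨sub_eq_zero.1 h, rfl⟩
    · exact .inr ⟨rfl, sub_eq_zero.1 h⟩
  · exact .inr ⟨rfl, rfl⟩

theorem ae_qPoint_sub_ne {A P : Finset ℂ} (hA : ParallelogramFree A) (hP : ParallelogramFree P)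
    {i j k l : ℂ × ℂ} (hi : i ∈ P ×ˢ A) (hj : j ∈ P ×ˢ A) (hk : k ∈ P ×ˢ A) (hl : l ∈ P ×ˢ A)
    (hij : i ≠ j) (hik : i ≠ k) :
    ∀ᵐ uv, qPoint uv j - qPoint uv i ≠ qPoint uv l - qPoint uv k := by
  have h : j.1 - i.1 - l.1 + k.1 ≠ 0 ∨ j.1 * j.2 - i.1 * i.2 - l.1 * l.2 + k.1 * k.2 ≠ 0 ∨
      j.2 - i.2 - l.2 + k.2 - (j.1 * j.2 - i.1 * i.2 - l.1 * l.2 + k.1 * k.2) ≠ 0 := by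
    by_contra! ⟨hp, hpa, ha⟩
    rcases eq_or_eq_of_add_eq_add_of_mul_add_mul_eq hA hP hi hj hk hl (by linear_combination -hp)
      (by linear_combination -hpa - ha) (by linear_combination -hpa) with h | h
    exacts [hij h, hik h]
  filter_upwards [ae_mul_fst_add_mul_snd_add_ne_zero h] with uv huv e
  exact huv (by simp only [qPoint] at e; linear_combination e)

theorem ae_not_collinear_qPoint {i j k : ℂ × ℂ}
    (h : ∀ᵐ v : ℂ, ((j.1 - i.1) * conj (k.1 - i.1)).im ≠ 0 ∨
      (j.1 - i.1) * conj (qPoint (0, v) k - qPoint (0, v) i) -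
        conj (qPoint (0, v) j - qPoint (0, v) i) * (k.1 - i.1) ≠ 0 ∨
      ((qPoint (0, v) j - qPoint (0, v) i) * conj (qPoint (0, v) k - qPoint (0, v) i)).im ≠ 0) :
    ∀ᵐ uv, ¬Collinear ℝ ({qPoint uv i, qPoint uv j, qPoint uv k} : Set ℂ) := by
  filter_upwards [ae_im_mul_conj_ne_zero (by simp only [qPoint]; fun_prop)
    (by simp only [qPoint]; fun_prop) h] with uv huv
  rwa [collinear_iff_im_mul_conj_eq_zero, qPoint_sub_qPoint uv i j, qPoint_sub_qPoint uv i k]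

theorem ae_not_collinear_qPoint_of_fst_eq {i j k : ℂ × ℂ} (hij : i.1 = j.1) (hik : i.1 = k.1)
    (ha : ¬Collinear ℝ ({i.2, j.2, k.2} : Set ℂ)) :
    ∀ᵐ uv, ¬Collinear ℝ ({qPoint uv i, qPoint uv j, qPoint uv k} : Set ℂ) := by
  refine ae_not_collinear_qPoint ?_
  filter_upwards [ae_mul_sub_add_one_ne_zero i.1] with v hv
  rw [collinear_iff_im_mul_conj_eq_zero] at ha
  rw [qPoint_zero_sub_qPoint_zero_of_fst_eq v hij, qPoint_zero_sub_qPoint_zero_of_fst_eq v hik,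
    im_mul_mul_conj_mul]
  exact .inr (.inr (mul_ne_zero (normSq_pos.2 hv).ne' ha))

theorem ae_not_collinear_qPoint_of_fst_eq_of_fst_ne {i j k : ℂ × ℂ} (hij : i ≠ j)
    (hp : i.1 = j.1) (hk : k.1 ≠ i.1) :
    ∀ᵐ uv, ¬Collinear ℝ ({qPoint uv i, qPoint uv j, qPoint uv k} : Set ℂ) := by
  refine ae_not_collinear_qPoint ?_
  filter_upwards [ae_mul_sub_add_one_ne_zero i.1] with v hv
  have ha : j.2 - i.2 ≠ 0 := sub_ne_zero.2 fun h => hij (Prod.ext hp h.symm)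
  refine .inr (.inl ?_)
  rw [qPoint_zero_sub_qPoint_zero_of_fst_eq v hp, ← hp, sub_self, zero_mul, zero_sub, neg_ne_zero]
  exact mul_ne_zero ((map_ne_zero _).2 (mul_ne_zero hv ha)) (sub_ne_zero.2 hk)

theorem ae_not_collinear_qPoint_of_not_collinear_fst {i j k : ℂ × ℂ}
    (hp : ¬Collinear ℝ ({i.1, j.1, k.1} : Set ℂ)) :
    ∀ᵐ uv, ¬Collinear ℝ ({qPoint uv i, qPoint uv j, qPoint uv k} : Set ℂ) :=
  ae_not_collinear_qPoint <| .of_forall fun _ =>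
    .inl ((collinear_iff_im_mul_conj_eq_zero _ _ _).not.1 hp)

theorem ae_not_collinear_qPoint_of_mem {A P : Finset ℂ} (hA : ParallelogramFree A)
    (hP : ParallelogramFree P) {i j k : ℂ × ℂ} (hi : i ∈ P ×ˢ A) (hj : j ∈ P ×ˢ A)
    (hk : k ∈ P ×ˢ A) (hij : i ≠ j) (hik : i ≠ k) (hjk : j ≠ k) :
    ∀ᵐ uv, ¬Collinear ℝ ({qPoint uv i, qPoint uv j, qPoint uv k} : Set ℂ) := by
  rw [Finset.mem_product] at hi hj hk
  by_cases hpij : i.1 = j.1 <;> by_cases hpik : i.1 = k.1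
  · refine ae_not_collinear_qPoint_of_fst_eq hpij hpik (hA.not_collinear hi.2 hj.2 hk.2 ?_ ?_ ?_)
    exacts [fun h => hij (Prod.ext hpij h), fun h => hik (Prod.ext hpik h),
      fun h => hjk (Prod.ext (hpij.symm.trans hpik) h)]
  · exact ae_not_collinear_qPoint_of_fst_eq_of_fst_ne hij hpij (Ne.symm hpik)
  · filter_upwards [ae_not_collinear_qPoint_of_fst_eq_of_fst_ne hik hpik (hpij ∘ Eq.symm)]
      with uv h
    rwa [Set.pair_comm]
  by_cases hpjk : j.1 = k.1
  · filter_upwards [ae_not_collinear_qPoint_of_fst_eq_of_fst_ne hjk hpjk hpij] with uv h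
    rwa [Set.insert_comm, Set.pair_comm]
  · exact ae_not_collinear_qPoint_of_not_collinear_fst
      (hP.not_collinear hi.1 hj.1 hk.1 hpij hpik hpjk)

theorem not_collinear_of_subset_image {ι : Type*} {s : Finset ι} {f : ι → ℂ}
    (h : ∀ i ∈ s, ∀ j ∈ s, ∀ k ∈ s, i ≠ j → i ≠ k → j ≠ k →
      ¬Collinear ℝ ({f i, f j, f k} : Set ℂ))
    {S : Finset ℂ} (hS : S ⊆ s.image f) (hS3 : S.card = 3) : ¬Collinear ℝ (S : Set ℂ) := by
  obtain ⟨x, y, z, hxy, hxz, hyz, rfl⟩ := Finset.card_eq_three.1 hS3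
  simp only [Finset.insert_subset_iff, Finset.singleton_subset_iff, Finset.mem_image] at hS
  obtain ⟨⟨i, hi, rfl⟩, ⟨j, hj, rfl⟩, ⟨k, hk, rfl⟩⟩ := hS
  simpa using h i hi j hj k hk (ne_of_apply_ne f hxy) (ne_of_apply_ne f hxz) (ne_of_apply_ne f hyz)

theorem not_hasParallelogram_image {ι : Type*} {s : Finset ι} {f : ι → ℂ}
    (h : ∀ i ∈ s, ∀ j ∈ s, ∀ k ∈ s, ∀ l ∈ s, i ≠ j → i ≠ k → f j - f i ≠ f l - f k) :
    ¬HasParallelogram (s.image f) := by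
  rintro ⟨_, h₁, _, h₂, _, h₃, _, h₄, h12, h13, -, -, -, -, e⟩
  obtain ⟨i, hi, rfl⟩ := Finset.mem_image.1 h₁
  obtain ⟨j, hj, rfl⟩ := Finset.mem_image.1 h₂
  obtain ⟨k, hk, rfl⟩ := Finset.mem_image.1 h₃
  obtain ⟨l, hl, rfl⟩ := Finset.mem_image.1 h₄
  exact h i hi j hj k hk l hl (ne_of_apply_ne f h12) (ne_of_apply_ne f h13) e

/-- If `A` and `P` are parallelogram-free, then the set of pairs `(u, v) ∈ ℂ²` for
which `Q(P, A, u, v)` has fewer than `|A|·|P|` points, or three collinear points, or a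
parallelogram, has Lebesgue measure zero. -/
theorem stmt13 (A P : Finset ℂ) (hA : ParallelogramFree A) (hP : ParallelogramFree P) :
    volume {uv : ℂ × ℂ |
      (Qset P A uv.1 uv.2).card < A.card * P.card ∨
      (∃ S ⊆ Qset P A uv.1 uv.2, S.card = 3 ∧ Collinear ℝ (S : Set ℂ)) ∨
      HasParallelogram (Qset P A uv.1 uv.2)} = 0 := by
  have hinj : ∀ᵐ uv, ∀ i ∈ P ×ˢ A, ∀ j ∈ P ×ˢ A, qPoint uv i = qPoint uv j → i = j := by
    simp only [eventually_all_finset]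
    intro i _ j _
    rcases eq_or_ne i j with rfl | hij
    · exact .of_forall fun _ _ => rfl
    · filter_upwards [ae_qPoint_ne hij] with uv h e using absurd e h
  have hcol : ∀ᵐ uv, ∀ i ∈ P ×ˢ A, ∀ j ∈ P ×ˢ A, ∀ k ∈ P ×ˢ A, i ≠ j → i ≠ k → j ≠ k →
      ¬Collinear ℝ ({qPoint uv i, qPoint uv j, qPoint uv k} : Set ℂ) := by
    simp only [eventually_all_finset, eventually_imp_distrib_left]
    exact fun i hi j hj k hk => ae_not_collinear_qPoint_of_mem hA hP hi hj hk
  have hpar : ∀ᵐ uv, ∀ i ∈ P ×ˢ A, ∀ j ∈ P ×ˢ A, ∀ k ∈ P ×ˢ A, ∀ l ∈ P ×ˢ A, i ≠ j → i ≠ k →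
      qPoint uv j - qPoint uv i ≠ qPoint uv l - qPoint uv k := by
    simp only [eventually_all_finset, eventually_imp_distrib_left]
    exact fun i hi j hj k hk l hl => ae_qPoint_sub_ne hA hP hi hj hk hl
  refine measure_mono_null ?_ (ae_iff.1 (hinj.and (hcol.and hpar)))
  intro uv hbad ⟨hinj, hcol, hpar⟩
  simp only [Set.mem_ofPred_eq, Qset_eq_image] at hbad
  rcases hbad with hcard | ⟨S, hS, hS3, hSc⟩ | hQ
  · rw [Finset.card_image_of_injOn hinj, Finset.card_product, mul_comm] at hcard
    exact lt_irrefl _ hcard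
  · exact not_collinear_of_subset_image hcol hS hS3 hSc
  · exact not_hasParallelogram_image hpar hQ
end
end

section
/- Let k ≥ 3, let R = {e^{2πij/k} : 0 ≤ j ≤ k − 1} ⊆ ℂ be the vertex set of a regular k-gon, and let P ⊆ R with |P| ≥ 3. Then for every finite set A ⊆ ℂ with |A| ≥ 2 there exist a constant c > 0 and a threshold N such that for all n ≥ N, S_P(n) ≥ c·n^{i_R(A)}. -/
open MeasureTheory

noncomputable section

/-!
The vertices of the regular `k`-gon are the powers of `ζ = e^{2πi/k}`. The box `B_M` of sums
`∑ c_j ζ^j` with integer coefficients `0 ≤ c_j < M` is invariant under multiplication by `ζ`,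
so `z·P + w ⊆ B_{2M}` whenever `z, w ∈ B_M`. A copy of `P` arises from at most `|P|²` pairs
`(z, w)`, hence `S_P(B_{2M}) ≥ |B_M|(|B_M| - 1)/|P|²`. As `|B_{4M}| ≤ 4^k |B_M|`, taking `M`
maximal with `|B_{2M}| ≤ n` gives `S_P(n) ≥ c n²`.

This suffices because `i_R(A) ≤ 2`: sending a pair (isometry `g` of `R`, copy `Q = f(R)` of `R`
in `A`) to the images of two fixed vertices under `f ∘ g` is injective into the ordered pairs of
distinct points of `A`, so `I · S_R(A) + |A| ≤ |A|²`.
-/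

open Finset

lemma affine_coeffs_eq_of_ne {p q a b a' b' : ℂ} (hpq : p ≠ q)
    (hp : a * p + b = a' * p + b') (hq : a * q + b = a' * q + b') : a = a' ∧ b = b' := by
  have ha : a = a' := by
    have : (a - a') * (p - q) = 0 := by linear_combination hp - hq
    simpa [sub_eq_zero, hpq] using this
  subst ha
  exact ⟨rfl, add_left_cancel hp⟩

section LatticeBox

def zeta (k : ℕ) : ℂ := Complex.exp (2 * Real.pi * Complex.I / k)

variable {k : ℕ} [NeZero k]

lemma zeta_pow_self : zeta k ^ k = 1 := by
  rw [zeta, ← Complex.exp_nat_mul, mul_div_cancel₀ _ (Nat.cast_ne_zero.mpr (NeZero.ne k)),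
    Complex.exp_two_pi_mul_I]

lemma zeta_pow_mod (m : ℕ) : zeta k ^ (m % k) = zeta k ^ m := by
  conv_rhs => rw [← Nat.div_add_mod m k, pow_add, pow_mul, zeta_pow_self, one_pow, one_mul]

lemma zeta_pow_val_add (a b : ZMod k) :
    zeta k ^ (a + b).val = zeta k ^ a.val * zeta k ^ b.val := by
  rw [ZMod.val_add, zeta_pow_mod, pow_add]

lemma exists_eq_zeta_pow_of_mem_Rpoly {p : ℂ} (hp : p ∈ Rpoly k) :
    ∃ i : ZMod k, p = zeta k ^ i.val := by
  obtain ⟨j, -, rfl⟩ := Finset.mem_image.mp hp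
  refine ⟨j, ?_⟩
  rw [ZMod.val_natCast, zeta_pow_mod, zeta, ← Complex.exp_nat_mul]
  ring_nf

variable (k) in
def latticePoint (c : ZMod k → ℕ) : ℂ :=
  ∑ j : ZMod k, (c j : ℂ) * zeta k ^ j.val

variable (k) in
def latticeBox (M : ℕ) : Finset ℂ :=
  (Fintype.piFinset fun _ : ZMod k => range M).image (latticePoint k)

lemma latticePoint_add (c c' : ZMod k → ℕ) :
    latticePoint k (c + c') = latticePoint k c + latticePoint k c' := by
  simp only [latticePoint, Pi.add_apply, Nat.cast_add, add_mul, sum_add_distrib]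

lemma mem_latticeBox {M : ℕ} {z : ℂ} :
    z ∈ latticeBox k M ↔ ∃ c : ZMod k → ℕ, (∀ j, c j < M) ∧ latticePoint k c = z := by
  simp [latticeBox]

lemma latticeBox_mono {M M' : ℕ} (h : M ≤ M') : latticeBox k M ⊆ latticeBox k M' :=
  image_subset_image fun _ hc => Fintype.mem_piFinset.mpr fun j =>
    (mem_range.mp (Fintype.mem_piFinset.mp hc j)).trans_le h |> mem_range.mpr

lemma zero_mem_latticeBox {M : ℕ} (hM : 0 < M) : 0 ∈ latticeBox k M :=
  mem_latticeBox.mpr ⟨0, fun _ => hM, by simp [latticePoint]⟩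

/-- Multiplying by `ζ^i` shifts the coefficients cyclically. -/
lemma mul_zeta_pow_mem_latticeBox {M : ℕ} {z : ℂ} (hz : z ∈ latticeBox k M) (i : ZMod k) :
    z * zeta k ^ i.val ∈ latticeBox k M := by
  obtain ⟨c, hc, rfl⟩ := mem_latticeBox.mp hz
  refine mem_latticeBox.mpr ⟨fun j => c (j - i), fun j => hc _, ?_⟩
  rw [latticePoint, latticePoint, sum_mul]
  refine (Fintype.sum_equiv (Equiv.addRight i) _ _ fun j => ?_).symm
  simp only [Equiv.coe_addRight, add_sub_cancel_right, mul_assoc, ← zeta_pow_val_add]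

lemma add_mem_latticeBox {M : ℕ} {z w : ℂ} (hz : z ∈ latticeBox k M) (hw : w ∈ latticeBox k M) :
    z + w ∈ latticeBox k (2 * M) := by
  obtain ⟨c, hc, rfl⟩ := mem_latticeBox.mp hz
  obtain ⟨c', hc', rfl⟩ := mem_latticeBox.mp hw
  refine mem_latticeBox.mpr ⟨c + c', fun j => ?_, latticePoint_add c c'⟩
  have := hc j; have := hc' j
  simp only [Pi.add_apply]; omega

lemma le_card_latticeBox (M : ℕ) : M ≤ (latticeBox k M).card := by
  have hsub : (range M).image (Nat.cast : ℕ → ℂ) ⊆ latticeBox k M := by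
    intro z hz
    obtain ⟨a, ha, rfl⟩ := mem_image.mp hz
    refine mem_latticeBox.mpr ⟨Pi.single 0 a, fun j => ?_, ?_⟩
    · rcases eq_or_ne j 0 with rfl | hj
      · simpa using ha
      · simpa [hj] using (Nat.zero_le a).trans_lt (mem_range.mp ha)
    · rw [latticePoint, sum_eq_single 0 (fun j _ hj => by simp [hj]) (by simp)]
      simp
  simpa [card_image_of_injective _ Nat.cast_injective] using card_le_card hsub

/-- Split each coefficient `c_j < tM` as `M ⌊c_j / M⌋ + (c_j mod M)`. -/
lemma card_latticeBox_mul_le {M : ℕ} (hM : 0 < M) (t : ℕ) :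
    (latticeBox k (t * M)).card ≤ t ^ k * (latticeBox k M).card := by
  set D := (Fintype.piFinset fun _ : ZMod k => range t).image
    fun d => latticePoint k (fun j => M * d j)
  have hsub : latticeBox k (t * M) ⊆ image₂ (· + ·) D (latticeBox k M) := by
    intro z hz
    obtain ⟨c, hc, rfl⟩ := mem_latticeBox.mp hz
    refine mem_image₂.mpr ⟨_, mem_image_of_mem _ (a := fun j => c j / M)
      (Fintype.mem_piFinset.mpr fun j => ?_),
      _, mem_latticeBox.mpr ⟨fun j => c j % M, fun j => Nat.mod_lt _ hM, rfl⟩, ?_⟩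
    · exact mem_range.mpr ((Nat.div_lt_iff_lt_mul hM).mpr (hc j))
    · rw [← latticePoint_add]
      exact congrArg _ (funext fun j => Nat.div_add_mod (c j) M)
  have hD : D.card ≤ t ^ k := card_image_le.trans (by simp [ZMod.card])
  calc (latticeBox k (t * M)).card ≤ _ := card_le_card hsub
    _ ≤ D.card * (latticeBox k M).card := card_image₂_le _ _ _
    _ ≤ _ := Nat.mul_le_mul_right _ hD

end LatticeBox

lemma SP_eq_card_filter (P Q : Finset ℂ) [DecidablePred (SimilarCopy P)] :
    SP P Q = (Q.powerset.filter (SimilarCopy P)).card := by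
  unfold SP; congr!

lemma SP_mono (P : Finset ℂ) {Q Q' : Finset ℂ} (h : Q ⊆ Q') : SP P Q ≤ SP P Q' := by
  classical
  rw [SP_eq_card_filter, SP_eq_card_filter]
  exact card_le_card (filter_subset_filter _ (powerset_mono.mpr h))

lemma SP_le_two_pow_card (P Q : Finset ℂ) : SP P Q ≤ 2 ^ Q.card := by
  classical
  rw [SP_eq_card_filter, ← card_powerset]
  exact card_filter_le _ _

lemma SP_le_SPn (P Q : Finset ℂ) : SP P Q ≤ SPn P Q.card :=
  le_csSup ⟨2 ^ Q.card, by rintro _ ⟨Q', hQ', rfl⟩; exact hQ' ▸ SP_le_two_pow_card P Q'⟩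
    ⟨Q, rfl, rfl⟩

lemma SP_le_SPn_of_card_le (P Q : Finset ℂ) {n : ℕ} (h : Q.card ≤ n) : SP P Q ≤ SPn P n := by
  obtain ⟨Q', hQQ', rfl⟩ := Infinite.exists_superset_card_eq Q n h
  exact (SP_mono P hQQ').trans (SP_le_SPn P Q')

/-- A copy `Q₀ = z·P + w` determines `(z, w)` through the images of two distinct points of `P`,
which lie in `Q₀ × Q₀`. -/
lemma card_le_sq_mul_SP {P Q : Finset ℂ} (hP : 1 < P.card) {s : Finset (ℂ × ℂ)}
    (hs0 : ∀ zw ∈ s, zw.1 ≠ 0) (hsQ : ∀ zw ∈ s, ∀ p ∈ P, zw.1 * p + zw.2 ∈ Q) :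
    s.card ≤ P.card ^ 2 * SP P Q := by
  classical
  obtain ⟨p₁, hp₁, p₂, hp₂, hp⟩ := one_lt_card.mp hP
  set F : ℂ × ℂ → Finset ℂ := fun zw => P.image fun p => zw.1 * p + zw.2
  have hfiber : ∀ Q₀ ∈ s.image F, (s.filter fun zw => F zw = Q₀).card ≤ P.card ^ 2 := by
    intro Q₀ hQ₀
    obtain ⟨zw₀, -, rfl⟩ := mem_image.mp hQ₀
    calc (s.filter fun zw => F zw = F zw₀).card ≤ (F zw₀ ×ˢ F zw₀).card := by
          refine card_le_card_of_injOn (fun zw => (zw.1 * p₁ + zw.2, zw.1 * p₂ + zw.2))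
            (fun zw hzw => ?_) (fun zw _ zw' _ h => ?_)
          · rw [coe_filter] at hzw
            rw [mem_coe, mem_product, ← hzw.2]
            exact ⟨mem_image_of_mem _ hp₁, mem_image_of_mem _ hp₂⟩
          · obtain ⟨h₁, h₂⟩ := Prod.mk.inj h
            obtain ⟨hz, hw⟩ := affine_coeffs_eq_of_ne hp h₁ h₂
            exact Prod.ext hz hw
      _ ≤ P.card ^ 2 := by rw [card_product, sq]; exact Nat.mul_le_mul card_image_le card_image_le
  have himage : s.image F ⊆ Q.powerset.filter (SimilarCopy P) := by
    intro Q₀ hQ₀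
    obtain ⟨zw, hzw, rfl⟩ := mem_image.mp hQ₀
    refine mem_filter.mpr ⟨mem_powerset.mpr fun q hq => ?_, zw.1, zw.2, hs0 zw hzw, coe_image⟩
    obtain ⟨p, hp, rfl⟩ := mem_image.mp hq
    exact hsQ zw hzw p hp
  calc s.card ≤ P.card ^ 2 * (s.image F).card := card_le_mul_card_image s _ hfiber
    _ ≤ P.card ^ 2 * SP P Q := by
        rw [SP_eq_card_filter]; exact Nat.mul_le_mul_left _ (card_le_card himage)

lemma card_latticeBox_mul_le_SP {k : ℕ} [NeZero k] {P : Finset ℂ} (hPR : P ⊆ Rpoly k)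
    (hP : 1 < P.card) {M : ℕ} (hM : 0 < M) :
    ((latticeBox k M).card - 1) * (latticeBox k M).card ≤
      P.card ^ 2 * SP P (latticeBox k (2 * M)) := by
  have hs := card_le_sq_mul_SP hP (s := ((latticeBox k M).erase 0) ×ˢ latticeBox k M)
    (fun zw hzw => ne_of_mem_erase (mem_product.mp hzw).1) (fun zw hzw p hp => by
      obtain ⟨hz, hw⟩ := mem_product.mp hzw
      obtain ⟨i, rfl⟩ := exists_eq_zeta_pow_of_mem_Rpoly (hPR hp)
      exact add_mem_latticeBox (mul_zeta_pow_mem_latticeBox (mem_of_mem_erase hz) i) hw)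
  rwa [card_product, card_erase_of_mem (zero_mem_latticeBox hM)] at hs

lemma exists_le_and_lt_succ {f : ℕ → ℕ} (hf : ∀ m, m ≤ f m) {m₀ n : ℕ} (h : f m₀ ≤ n) :
    ∃ M, m₀ ≤ M ∧ f M ≤ n ∧ n < f (M + 1) := by
  have hm₀ : m₀ ≤ n := (hf m₀).trans h
  refine ⟨Nat.findGreatest (fun M => f M ≤ n) n, Nat.le_findGreatest hm₀ h,
    Nat.findGreatest_spec (P := fun M => f M ≤ n) hm₀ h, ?_⟩
  by_contra! hle
  by_cases hn : Nat.findGreatest (fun M => f M ≤ n) n + 1 ≤ n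
  · exact Nat.findGreatest_is_greatest (Nat.lt_succ_self _) hn hle
  · exact absurd ((hf _).trans hle) (by omega)

lemma sq_le_mul_SPn {k : ℕ} [NeZero k] {P : Finset ℂ} (hPR : P ⊆ Rpoly k) (hP : 1 < P.card)
    {n : ℕ} (hn : max (latticeBox k 2).card (4 ^ k) ≤ n) :
    n ^ 2 ≤ 2 * 16 ^ k * P.card ^ 2 * SPn P n := by
  obtain ⟨M, hM, hMn, hnM⟩ := exists_le_and_lt_succ (f := fun M => (latticeBox k (2 * M)).card)
    (fun M => (by omega : M ≤ 2 * M).trans (le_card_latticeBox _)) (m₀ := 1)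
    (le_of_max_le_left hn)
  have hgrowth : (latticeBox k (2 * (M + 1))).card ≤ 4 ^ k * (latticeBox k M).card :=
    (card_le_card (latticeBox_mono (by omega))).trans (card_latticeBox_mul_le hM 4)
  have hcount := (card_latticeBox_mul_le_SP hPR hP hM).trans
    (Nat.mul_le_mul_left _ (SP_le_SPn_of_card_le P _ hMn))
  generalize (latticeBox k M).card = x at hgrowth hcount
  have hx : 4 ^ k * 1 < 4 ^ k * x := by
    rw [mul_one]; exact (le_of_max_le_right hn).trans_lt (hnM.trans_le hgrowth)
  obtain ⟨y, rfl⟩ : ∃ y, x = y + 2 := ⟨x - 2, by have := lt_of_mul_lt_mul_left hx; omega⟩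
  have hn' : n ≤ 4 ^ k * (y + 2) := (hnM.trans_le hgrowth).le
  calc n ^ 2 ≤ (4 ^ k * (y + 2)) ^ 2 := Nat.pow_le_pow_left hn' 2
    _ = 16 ^ k * ((y + 2) * (y + 2)) := by rw [mul_pow, ← pow_mul, mul_comm k, pow_mul]; ring
    _ ≤ 16 ^ k * (2 * ((y + 2 - 1) * (y + 2))) :=
        Nat.mul_le_mul_left _ (by rw [show y + 2 - 1 = y + 1 by omega]; nlinarith)
    _ ≤ 16 ^ k * (2 * (P.card ^ 2 * SPn P n)) := by gcongr
    _ = 2 * 16 ^ k * P.card ^ 2 * SPn P n := by ring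

lemma isoPlusCard_mul_SP_le {R : Finset ℂ} (hR : 1 < R.card) (A : Finset ℂ) :
    IsoPlusCard R * SP R A ≤ A.offDiag.card := by
  classical
  obtain ⟨r₀, hr₀, r₁, hr₁, hr⟩ := one_lt_card.mp hR
  set Iso : Set (ℂ × ℂ) := {uw | ‖uw.1‖ = 1 ∧
    (fun p => uw.1 * p + uw.2) '' (R : Set ℂ) = (R : Set ℂ)}
  set copies := A.powerset.filter (SimilarCopy R)
  choose! f g hf0 hf using fun Q (hQ : Q ∈ copies) => (mem_filter.mp hQ).2
  have hcomp : ∀ uw ∈ Iso, ∀ Q ∈ copies,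
      (Q : Set ℂ) = (fun p => f Q * (uw.1 * p + uw.2) + g Q) '' (R : Set ℂ) := by
    intro uw huw Q hQ
    conv_lhs => rw [hf Q hQ, ← huw.2, Set.image_image]
  have hmem : ∀ uw ∈ Iso, ∀ Q ∈ copies, ∀ r ∈ R, f Q * (uw.1 * r + uw.2) + g Q ∈ A := by
    intro uw huw Q hQ r hr
    have : f Q * (uw.1 * r + uw.2) + g Q ∈ (Q : Set ℂ) := hcomp uw huw Q hQ ▸ ⟨r, hr, rfl⟩
    exact (mem_powerset.mp (mem_filter.mp hQ).1) this
  have hne : ∀ uw ∈ Iso, uw.1 ≠ 0 := fun uw huw h => by simpa [h] using huw.1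
  calc IsoPlusCard R * SP R A = (Iso ×ˢ (copies : Set (Finset ℂ))).ncard := by
        rw [Set.ncard_prod, Set.ncard_coe_finset, SP_eq_card_filter]; rfl
    _ ≤ (A.offDiag : Set (ℂ × ℂ)).ncard := by
        refine Set.ncard_le_ncard_of_injOn (fun x => (f x.2 * (x.1.1 * r₀ + x.1.2) + g x.2,
          f x.2 * (x.1.1 * r₁ + x.1.2) + g x.2)) ?_ ?_
        · rintro ⟨uw, Q⟩ ⟨huw, hQ⟩
          refine mem_offDiag.mpr ⟨hmem uw huw Q hQ r₀ hr₀, hmem uw huw Q hQ r₁ hr₁, fun h => hr ?_⟩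
          exact mul_left_cancel₀ (hne uw huw) (add_right_cancel
            (mul_left_cancel₀ (hf0 Q hQ) (add_right_cancel h)))
        · rintro ⟨⟨u, w⟩, Q⟩ ⟨huw, hQ⟩ ⟨⟨u', w'⟩, Q'⟩ ⟨huw', hQ'⟩ h
          obtain ⟨h₀, h₁⟩ := Prod.mk.inj h
          obtain ⟨ha, hb⟩ := affine_coeffs_eq_of_ne hr
            (a := f Q * u) (b := f Q * w + g Q) (a' := f Q' * u') (b' := f Q' * w' + g Q')
            (by linear_combination h₀) (by linear_combination h₁)
          obtain rfl : Q = Q' := coe_injective <| by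
            rw [hcomp _ huw Q hQ, hcomp _ huw' Q' hQ']
            exact Set.image_congr fun p _ => by dsimp only; linear_combination p * ha + hb
          have hu : u = u' := mul_left_cancel₀ (hf0 Q hQ) ha
          subst hu
          simp [mul_left_cancel₀ (hf0 Q hQ) (add_right_cancel hb)]
    _ = A.offDiag.card := Set.ncard_coe_finset _

lemma indexP_le_two {R : Finset ℂ} (hR : 1 < R.card) (A : Finset ℂ) : indexP R A ≤ 2 := by
  rcases le_or_gt A.card 1 with hA | hA
  -- for `|A| ≤ 1`, `log |A| = 0` and division by zero gives `0`
  · interval_cases h : A.card <;> simp [indexP, h]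
  have ha : (1 : ℝ) < A.card := by exact_mod_cast hA
  have hbound : IsoPlusCard R * SP R A + A.card ≤ A.card ^ 2 := by
    have := isoPlusCard_mul_SP_le hR A
    rw [offDiag_card] at this
    rw [sq]; have := Nat.le_mul_self A.card; omega
  rw [indexP, div_le_iff₀ (Real.log_pos ha)]
  calc _ ≤ Real.log ((A.card : ℝ) ^ 2) := Real.log_le_log (by positivity) (by exact_mod_cast hbound)
    _ = 2 * Real.log A.card := by simp [Real.log_pow]

theorem stmt14_general (k : ℕ) (P : Finset ℂ) (hPsub : P ⊆ Rpoly k)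
    (hP : 3 ≤ P.card) (A : Finset ℂ) :
    ∃ c : ℝ, 0 < c ∧ ∃ N : ℕ, ∀ n : ℕ, N ≤ n →
      c * (n : ℝ) ^ indexP (Rpoly k) A ≤ (SPn P n : ℝ) := by
  have hP1 : 1 < P.card := by omega
  have : NeZero k := ⟨by rintro rfl; simpa [Rpoly] using hP.trans (card_le_card hPsub)⟩
  have hR : 1 < (Rpoly k).card := hP1.trans_le (card_le_card hPsub)
  refine ⟨1 / (2 * 16 ^ k * P.card ^ 2), by positivity, max (latticeBox k 2).card (4 ^ k),
    fun n hn => ?_⟩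
  have hn1 : (1 : ℝ) ≤ n := by
    exact_mod_cast (Nat.one_le_pow k 4 (by norm_num)).trans (le_of_max_le_right hn)
  have hSPn : (n : ℝ) ^ 2 ≤ 2 * 16 ^ k * P.card ^ 2 * SPn P n := by
    exact_mod_cast sq_le_mul_SPn hPsub hP1 hn
  calc 1 / (2 * 16 ^ k * P.card ^ 2) * (n : ℝ) ^ indexP (Rpoly k) A
      ≤ 1 / (2 * 16 ^ k * P.card ^ 2) * (n : ℝ) ^ (2 : ℕ) := by
        gcongr
        exact_mod_cast Real.rpow_le_rpow_of_exponent_le hn1 (indexP_le_two hR A)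
    _ ≤ (SPn P n : ℝ) := by
        rw [div_mul_eq_mul_div, one_mul, div_le_iff₀ (by positivity)]
        linarith

/-- If `P` is a subset (with at least 3 points) of the vertex set `R` of a regular
`k`-gon, then for every finite `A` with `|A| ≥ 2`, `S_P(n) ≥ c·n^{i_R(A)}` for some
`c > 0` and all large `n`. -/
theorem stmt14 (k : ℕ) (hk : 3 ≤ k) (P : Finset ℂ) (hPsub : P ⊆ Rpoly k)
    (hP : 3 ≤ P.card) (A : Finset ℂ) (hA : 2 ≤ A.card) :
    ∃ c : ℝ, 0 < c ∧ ∃ N : ℕ, ∀ n : ℕ, N ≤ n →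
      c * (n : ℝ) ^ indexP (Rpoly k) A ≤ (SPn P n : ℝ) :=
  stmt14_general k P hPsub hP A
end
end

section
/- Let P ⊆ ℂ be a parallelogram-free pattern with |P| ≥ 3. Then for every n ≥ 1 and every parallelogram-free set A ⊆ ℂ with |A| = n, S_P(A) ≤ n^{3/2} + n; that is, S_P^∦(n) ≤ n^{3/2} + n for all n. -/
open MeasureTheory

noncomputable section

/-! Fix three points `p₁, p₂, p₃` of `P` and put `r = (p₂ - p₁) / (p₃ - p₁)`. A similar copy of
`P` is determined by the images `a, c` of `p₁, p₃`, and it contains the image of `p₂`, which is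
`lineMap a c r`. So `S_P(A)` is at most the number of pairs `(a, c) ∈ A²` with `lineMap a c r ∈ A`.
In a parallelogram-free set this relation contains no `2 × 2` rectangle, because the four points
`lineMap` would span a parallelogram, possibly degenerate. The Kővári–Sós–Turán count then bounds
the number of pairs by `n^{3/2} + n`. -/

open Finset AffineMap

section Rectangle

variable {α β : Type*} [DecidableEq α] [DecidableEq β]

theorem card_sq_le_of_not_rectangle {s : Finset α} {t : Finset β} {E : Finset (α × β)}
    (hE : E ⊆ s ×ˢ t)
    (hrect : ∀ a a' c c', a ≠ a' → c ≠ c' →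
      (a, c) ∈ E → (a, c') ∈ E → (a', c) ∈ E → (a', c') ∈ E → False) :
    #E ^ 2 ≤ #s * (#E + #t ^ 2) := by
  set N : α → Finset β := fun a => {c ∈ t | (a, c) ∈ E}
  have hsum : #E = ∑ a ∈ s, #(N a) := by
    rw [← inter_eq_right.2 hE, ← filter_mem_eq_inter, card_filter, sum_product]
    simp only [N, card_filter]
  have hdisj : (s : Set α).PairwiseDisjoint fun a => (N a).offDiag := by
    intro a _ a' _ haa'
    refine disjoint_left.2 fun ⟨c, c'⟩ h h' => ?_
    simp only [N, mem_offDiag, mem_filter] at h h'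
    exact hrect a a' c c' haa' h.2.2 h.1.2 h.2.1.2 h'.1.2 h'.2.1.2
  have hoff : ∑ a ∈ s, #(N a).offDiag ≤ #t.offDiag := by
    rw [← card_biUnion hdisj]
    exact card_le_card <| biUnion_subset.2 fun a _ => offDiag_mono (filter_subset _ _)
  have hsplit (u : Finset β) : #u ^ 2 = #u.offDiag + #u := by
    rw [offDiag_card, sq]
    have := Nat.le_mul_self #u
    omega
  have hsq : ∑ a ∈ s, #(N a) ^ 2 ≤ #E + #t ^ 2 := by
    rw [sum_congr rfl fun a _ => hsplit (N a), sum_add_distrib, ← hsum, hsplit t]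
    omega
  calc #E ^ 2 = (∑ a ∈ s, #(N a)) ^ 2 := by rw [hsum]
    _ ≤ #s * ∑ a ∈ s, #(N a) ^ 2 := sq_sum_le_card_mul_sum_sq
    _ ≤ #s * (#E + #t ^ 2) := Nat.mul_le_mul_left _ hsq

end Rectangle

theorem le_rpow_three_halves_add_of_sq_le {m n : ℝ} (hn : 0 ≤ n)
    (h : m ^ 2 ≤ n * (m + n ^ 2)) : m ≤ n ^ ((3 : ℝ) / 2) + n := by
  set r := n ^ ((3 : ℝ) / 2)
  have hr : 0 ≤ r := by positivity
  have hr2 : r ^ 2 = n ^ 3 := by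
    rw [← Real.rpow_mul_natCast hn]; norm_num
  nlinarith

namespace ParallelogramFree

variable {A : Finset ℂ}

theorem eq_of_sub_eq_sub (hA : ParallelogramFree A) {x y z : ℂ} (hx : x ∈ A) (hy : y ∈ A)
    (hz : z ∈ A) (h : y - x = z - y) : x = z := by
  by_contra hxz
  have hxy : x ≠ y := by rintro rfl; exact hxz (by linear_combination h)
  have hyz : y ≠ z := by rintro rfl; exact hxz (by linear_combination -h)
  have hmid : y = midpoint ℝ x z := by
    rw [eq_comm, midpoint_eq_iff', Equiv.pointReflection_apply, vsub_eq_sub, vadd_eq_add]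
    linear_combination h
  have hcol : Collinear ℝ ({x, y, z} : Set ℂ) := hmid ▸ (wbtw_midpoint ℝ x z).collinear
  have := hA.1 {x, y, z} (by simp [insert_subset_iff, hx, hy, hz]) (by simpa using hcol)
  rw [card_eq_three.2 ⟨x, y, z, hxy, hxz, hyz, rfl⟩] at this
  omega

theorem eq_or_eq_of_sub_eq_sub (hA : ParallelogramFree A) {a b c d : ℂ} (ha : a ∈ A)
    (hb : b ∈ A) (hc : c ∈ A) (hd : d ∈ A) (h : a - b = c - d) : a = b ∨ a = c := by
  by_contra! ⟨hab, hac⟩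
  have hcd : c ≠ d := fun hcd => hab (by linear_combination h + hcd)
  have hbd : b ≠ d := fun hbd => hac (by linear_combination h + hbd)
  -- a degenerate parallelogram would be three collinear points
  have had : a ≠ d := by
    rintro rfl
    have hbc := hA.eq_of_sub_eq_sub hb ha hc h
    exact hab (by linear_combination (h - hbc) / 2)
  have hbc : b ≠ c := by
    rintro rfl
    have hda := hA.eq_of_sub_eq_sub hd hb ha (by linear_combination -h)
    exact had hda.symm
  exact hA.2 ⟨b, hb, a, ha, d, hd, c, hc, Ne.symm hab, hbd, hbc, had, hac, hcd.symm, h⟩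

theorem not_rectangle_lineMap (hA : ParallelogramFree A) {r : ℂ} (hr₀ : r ≠ 0) (hr₁ : r ≠ 1)
    {a a' c c' : ℂ} (haa' : a ≠ a') (hcc' : c ≠ c') (h₁ : lineMap a c r ∈ A)
    (h₂ : lineMap a c' r ∈ A) (h₃ : lineMap a' c r ∈ A) (h₄ : lineMap a' c' r ∈ A) : False := by
  have hsub : lineMap a c r - lineMap a c' r = lineMap a' c r - lineMap a' c' r := by
    simp only [lineMap_apply_ring']; ring
  rcases hA.eq_or_eq_of_sub_eq_sub h₁ h₂ h₃ h₄ hsub with h | h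
  · simp only [lineMap_apply_ring'] at h
    exact mul_ne_zero hr₀ (sub_ne_zero.2 hcc') (by linear_combination h)
  · simp only [lineMap_apply_ring'] at h
    exact mul_ne_zero (sub_ne_zero.2 hr₁.symm) (sub_ne_zero.2 haa') (by linear_combination h)

theorem card_filter_lineMap_mem_le (hA : ParallelogramFree A) {r : ℂ} (hr₀ : r ≠ 0)
    (hr₁ : r ≠ 1) :
    (#{ac ∈ A ×ˢ A | lineMap ac.1 ac.2 r ∈ A} : ℝ) ≤ (#A : ℝ) ^ ((3 : ℝ) / 2) + #A := by
  refine le_rpow_three_halves_add_of_sq_le (by positivity) ?_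
  have := card_sq_le_of_not_rectangle
    (filter_subset (fun ac : ℂ × ℂ => lineMap ac.1 ac.2 r ∈ A) (A ×ˢ A))
    fun a a' c c' haa' hcc' h₁ h₂ h₃ h₄ => hA.not_rectangle_lineMap hr₀ hr₁ haa' hcc'
      (mem_filter.1 h₁).2 (mem_filter.1 h₂).2 (mem_filter.1 h₃).2 (mem_filter.1 h₄).2
  exact_mod_cast this

end ParallelogramFree

theorem mul_add_eq_lineMap {p q : ℂ} (hpq : p ≠ q) (z w x : ℂ) :
    z * x + w = lineMap (z * p + w) (z * q + w) ((x - p) / (q - p)) := by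
  rw [lineMap_apply_ring']
  field_simp [sub_ne_zero.2 hpq.symm]
  ring

theorem SP_le_card_filter_lineMap_mem {P A : Finset ℂ} {p₁ p₂ p₃ : ℂ} (hp₁ : p₁ ∈ P)
    (hp₂ : p₂ ∈ P) (hp₃ : p₃ ∈ P) (h₁₃ : p₁ ≠ p₃) :
    SP P A ≤ #{ac ∈ A ×ˢ A | lineMap ac.1 ac.2 ((p₂ - p₁) / (p₃ - p₁)) ∈ A} := by
  classical
  unfold SP
  rw [filter_congr_decidable]
  refine card_le_card_of_surjOn
    (fun ac => P.image fun x => lineMap ac.1 ac.2 ((x - p₁) / (p₃ - p₁))) ?_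
  rintro S hS
  obtain ⟨hSA, z, w, -, hSP⟩ := by simpa only [coe_filter, mem_powerset] using hS
  have hmem : ∀ p ∈ P, z * p + w ∈ A := fun p hp =>
    hSA (by rw [← mem_coe, hSP]; exact ⟨p, hp, rfl⟩)
  refine ⟨(z * p₁ + w, z * p₃ + w), ?_, ?_⟩
  · simp only [coe_filter, Set.mem_ofPred_eq, mem_product]
    exact ⟨⟨hmem p₁ hp₁, hmem p₃ hp₃⟩, mul_add_eq_lineMap h₁₃ z w p₂ ▸ hmem p₂ hp₂⟩
  · apply coe_injective
    rw [coe_image, hSP]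
    simp only [← mul_add_eq_lineMap h₁₃]

theorem stmt18_general (P : Finset ℂ) (hP : 3 ≤ P.card) :
    ∀ n : ℕ, 1 ≤ n → ∀ A : Finset ℂ, ParallelogramFree A → A.card = n →
      (SP P A : ℝ) ≤ (n : ℝ) ^ ((3 : ℝ) / 2) + (n : ℝ) := by
  rintro n - A hA rfl
  obtain ⟨p₁, hp₁, p₂, hp₂, p₃, hp₃, h₁₂, h₁₃, h₂₃⟩ := two_lt_card.1 hP
  have hr₀ : (p₂ - p₁) / (p₃ - p₁) ≠ 0 :=
    div_ne_zero (sub_ne_zero.2 h₁₂.symm) (sub_ne_zero.2 h₁₃.symm)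
  have hr₁ : (p₂ - p₁) / (p₃ - p₁) ≠ 1 := by
    rw [Ne, div_eq_one_iff_eq (sub_ne_zero.2 h₁₃.symm), sub_left_inj]
    exact h₂₃
  calc (SP P A : ℝ) ≤ _ := by exact_mod_cast SP_le_card_filter_lineMap_mem hp₁ hp₂ hp₃ h₁₃
    _ ≤ _ := hA.card_filter_lineMap_mem_le hr₀ hr₁

/-- Upper bound for parallelogram-free sets: if `P` is a parallelogram-free pattern
with `|P| ≥ 3`, then every parallelogram-free `n`-set `A` (with `n ≥ 1`) satisfies
`S_P(A) ≤ n^{3/2} + n`. -/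
theorem stmt18 (P : Finset ℂ) (hP : 3 ≤ P.card) (hPfree : ParallelogramFree P) :
    ∀ n : ℕ, 1 ≤ n → ∀ A : Finset ℂ, ParallelogramFree A → A.card = n →
      (SP P A : ℝ) ≤ (n : ℝ) ^ ((3 : ℝ) / 2) + (n : ℝ) :=
  stmt18_general P hP
end
end
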